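/- For x, y ∈ ρR̃: (1) ¬(x ≤ y) if and only if there exists a co-final subset L ⊆ (0,1] (having 0 as accumulation point) such that x|_L > y|_L in ρR̃|_L; (2) ¬(x < y) if and only if there exists a co-final subset L with x|_L ≥ y|_L; (3) x ≠ y if and only if there exists a co-final L with x|_L > y|_L or x|_L < y|_L. -/

import Mathlib

open MeasureTheory

namespace HFT

noncomputable section

/-- The index set `I = (0,1]`. -/
abbrev Idx : Type := {e : ℝ // 0 < e ∧ e ≤ 1}

/-- "For ε small": the property holds for all sufficiently small indices. -/
def Ev (P : Idx → Prop) : Prop := ∃ e0 : Idx, ∀ e : Idx, e.1 ≤ e0.1 → P e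

/-- A gauge: a net `ρ : I → (0,1]` tending to `0` as `ε → 0⁺`. -/
structure Gauge where
  ρ : Idx → ℝ
  pos : ∀ e, 0 < ρ e
  le_one : ∀ e, ρ e ≤ 1
  to_zero : ∀ δ : ℝ, 0 < δ → Ev fun e => ρ e < δ

variable (g : Gauge)

/-- A net of reals is ρ-moderate. -/
def ModerateR (x : Idx → ℝ) : Prop := ∃ N : ℕ, Ev fun e => |x e| ≤ (g.ρ e)⁻¹ ^ N

/-- Two real nets are ρ-equivalent: they define the same generalized number. -/
def EquivR (x y : Idx → ℝ) : Prop := ∀ m : ℕ, Ev fun e => |x e - y e| ≤ g.ρ e ^ m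

/-- ρ-negligible net. -/
def NegligibleR (x : Idx → ℝ) : Prop := EquivR g x fun _ => 0

/-- Order of the Robinson–Colombeau ring at the level of representatives. -/
def leR (x y : Idx → ℝ) : Prop :=
  ∃ z, NegligibleR g z ∧ Ev fun e => x e ≤ y e + z e

/-- Invertibility in the Robinson–Colombeau ring, at the level of representatives. -/
def InvR (x : Idx → ℝ) : Prop :=
  ∃ y, ModerateR g y ∧ EquivR g (fun e => x e * y e) fun _ => 1

/-- Strict order: `x < y` iff `x ≤ y` and `y − x` is invertible. -/
def ltR (x y : Idx → ℝ) : Prop := leR g x y ∧ InvR g fun e => y e - x e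

/-- `x > 0`: positive and invertible. -/
def PosInvR (x : Idx → ℝ) : Prop := ltR g (fun _ => 0) x

/-- Constant net. -/
def cR (c : ℝ) : Idx → ℝ := fun _ => c

/-- Positive infinite generalized number. -/
def InfiniteR (k : Idx → ℝ) : Prop := ∀ r : ℝ, 0 < r → leR g (cR r) k

/-- Strong infinite number: `|k| ≥ dρ^{−s}` for some real `s > 0`. -/
def StrongInfiniteR (k : Idx → ℝ) : Prop :=
  ∃ s : ℝ, 0 < s ∧ Ev fun e => g.ρ e ^ (-s) ≤ |k e|

def dRhoPow (m : ℕ) : Idx → ℝ := fun e => g.ρ e ^ m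
def dRhoNegPow (m : ℕ) : Idx → ℝ := fun e => (g.ρ e)⁻¹ ^ m

/-- Moderate complex nets. -/
def ModerateC (x : Idx → ℂ) : Prop := ModerateR g fun e => ‖x e‖

/-- Equivalent complex nets. -/
def EquivC (x y : Idx → ℂ) : Prop :=
  ∀ m : ℕ, Ev fun e => ‖x e - y e‖ ≤ g.ρ e ^ m

/- Subpoints: co-final subsets of the index set and relativized notions. -/

/-- `L ⊆ I` is co-final: `0` is an accumulation point of `L`. -/
def CoFinal (L : Set Idx) : Prop := ∀ δ : ℝ, 0 < δ → ∃ e ∈ L, e.1 < δ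

def EvOn (L : Set Idx) (P : Idx → Prop) : Prop :=
  ∃ e0 : Idx, ∀ e ∈ L, e.1 ≤ e0.1 → P e

def ModerateROn (L : Set Idx) (x : Idx → ℝ) : Prop :=
  ∃ N : ℕ, EvOn L fun e => |x e| ≤ (g.ρ e)⁻¹ ^ N

def EquivROn (L : Set Idx) (x y : Idx → ℝ) : Prop :=
  ∀ m : ℕ, EvOn L fun e => |x e - y e| ≤ g.ρ e ^ m

def NegligibleROn (L : Set Idx) (x : Idx → ℝ) : Prop := EquivROn g L x fun _ => 0

def leROn (L : Set Idx) (x y : Idx → ℝ) : Prop :=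
  ∃ z, NegligibleROn g L z ∧ EvOn L fun e => x e ≤ y e + z e

def InvROn (L : Set Idx) (x : Idx → ℝ) : Prop :=
  ∃ y, ModerateROn g L y ∧ EquivROn g L (fun e => x e * y e) fun _ => 1

def ltROn (L : Set Idx) (x y : Idx → ℝ) : Prop :=
  leROn g L x y ∧ InvROn g L fun e => y e - x e

/- Vector-valued generalized points. -/

abbrev En (n : ℕ) : Type := EuclideanSpace ℝ (Fin n)

def ModerateV {n : ℕ} (x : Idx → En n) : Prop := ModerateR g fun e => ‖x e‖

def EquivV {n : ℕ} (x y : Idx → En n) : Prop :=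
  ∀ m : ℕ, Ev fun e => ‖x e - y e‖ ≤ g.ρ e ^ m

def distNet {n : ℕ} (x y : Idx → En n) : Idx → ℝ := fun e => ‖x e - y e‖
def normNet {n : ℕ} (x : Idx → En n) : Idx → ℝ := fun e => ‖x e‖
def coord {n : ℕ} (x : Idx → En n) (i : Fin n) : Idx → ℝ := fun e => x e i

/-- Membership in the internal set generated by a net of subsets of `ℝⁿ`. -/
def MemInternal {n : ℕ} (A : Idx → Set (En n)) (x : Idx → En n) : Prop :=
  ∃ x', EquivV g x x' ∧ Ev fun e => x' e ∈ A e

/-- Strong membership: every representative is eventually in `A_ε`. -/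
def StrongMem {n : ℕ} (A : Idx → Set (En n)) (x : Idx → En n) : Prop :=
  ∀ x', EquivV g x x' → Ev fun e => x' e ∈ A e

/-- A (saturated) set of generalized points is open in the sharp topology. -/
def SharpOpen {n : ℕ} (S : Set (Idx → En n)) : Prop :=
  ∀ x, ModerateV g x → x ∈ S →
    ∃ r, PosInvR g r ∧ ∀ y, ModerateV g y → ltR g (distNet y x) r → y ∈ S

/-- Closed in the sharp topology. -/
def SharpClosed {n : ℕ} (S : Set (Idx → En n)) : Prop :=
  ∀ x, ModerateV g x → x ∉ S →
    ∃ r, PosInvR g r ∧ ∀ y, ModerateV g y → ltR g (distNet y x) r → y ∉ S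

/-- Closure in the sharp topology. -/
def SharpClosure {n : ℕ} (S : Set (Idx → En n)) : Set (Idx → En n) :=
  {x | ModerateV g x ∧ ∀ r, PosInvR g r → ∃ y ∈ S, ltR g (distNet y x) r}

/-- Sharply bounded set of generalized points. -/
def SharplyBounded {n : ℕ} (S : Set (Idx → En n)) : Prop :=
  ∃ R, PosInvR g R ∧ ∀ x ∈ S, ltR g (normNet x) R

/-- Functionally compact: an internal set generated by compacts which is sharply bounded. -/
def FCompact {n : ℕ} (S : Set (Idx → En n)) : Prop :=
  (∃ A : Idx → Set (En n), (∀ e, IsCompact (A e)) ∧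
    S = {x | ModerateV g x ∧ MemInternal g A x}) ∧ SharplyBounded g S

/-- Sharp ball of center `c` and radius `r`. -/
def BallG {n : ℕ} (c : Idx → En n) (r : Idx → ℝ) : Set (Idx → En n) :=
  {x | ModerateV g x ∧ ltR g (distNet x c) r}

/-- Pointwise sum of two sets of generalized points. -/
def sumSet {n : ℕ} (S T : Set (Idx → En n)) : Set (Idx → En n) :=
  {z | ∃ x ∈ S, ∃ y ∈ T, z = fun e => x e + y e}

/-- The generalized box `[−h,h]ⁿ` as a set of generalized points. -/
def BoxSet {n : ℕ} (h : Idx → ℝ) : Set (Idx → En n) :=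
  {x | ModerateV g x ∧ ∀ i : Fin n, leR g (fun e => |x e i|) h}

/-- All generalized (moderate) points. -/
def AllPts (n : ℕ) : Set (Idx → En n) := {x | ModerateV g x}

/- Derivatives of smooth maps on `ℝⁿ`. -/

noncomputable def pderivF {n : ℕ} {F : Type*} [NormedAddCommGroup F] [NormedSpace ℝ F]
    (i : Fin n) (f : En n → F) : En n → F :=
  fun x => fderiv ℝ f x (EuclideanSpace.single i 1)

/-- Iterated partial derivative `∂^α`. -/
noncomputable def pderivMulti {n : ℕ} {F : Type*} [NormedAddCommGroup F] [NormedSpace ℝ F]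
    (α : Fin n → ℕ) (f : En n → F) : En n → F :=
  (List.finRange n).foldr (fun i h => (pderivF i)^[α i] h) f

/-- The net `(f_ε)` of smooth functions defines a GSF on the set `X` of generalized points. -/
def IsGSFOn {n : ℕ} (X : Set (Idx → En n)) (f : Idx → En n → ℂ) : Prop :=
  (∀ e, ContDiff ℝ (⊤ : ℕ∞) (f e)) ∧
  ∀ x ∈ X, ∀ α : Fin n → ℕ,
    ModerateC g (fun e => pderivMulti α (f e) (x e)) ∧
    ∀ x' ∈ X, EquivV g x x' →
      EquivC g (fun e => pderivMulti α (f e) (x e)) (fun e => pderivMulti α (f e) (x' e))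

/-- Support of a GSF: sharp closure of the points where `|f(x)|` is positive invertible. -/
def suppNet {n : ℕ} (f : Idx → En n → ℂ) : Set (Idx → En n) :=
  SharpClosure g {x | ModerateV g x ∧ PosInvR g fun e => ‖f e (x e)‖}

/- Integration over hyperfinite boxes. -/

/-- The box `[−c,c]ⁿ ⊆ ℝⁿ`. -/
def box (n : ℕ) (c : ℝ) : Set (En n) := {v | ∀ i, |v i| ≤ c}

/-- ε-wise integral over the box `[−h_ε, h_ε]ⁿ`. -/
noncomputable def intBox {n : ℕ} (f : Idx → En n → ℂ) (h : Idx → ℝ) : Idx → ℂ :=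
  fun e => ∫ v in box n (h e), f e v

/-- Convolution of GSF, integrating over a box containing the support of the first factor. -/
noncomputable def convNet {n : ℕ} (f f' : Idx → En n → ℂ) (h : Idx → ℝ) :
    Idx → En n → ℂ :=
  fun e x => ∫ y in box n (h e), f e y * f' e (x - y)

/-- Dot product on `ℝⁿ`. -/
def dotP {n : ℕ} (x w : En n) : ℝ := ∑ i, x i * w i

/-- The hyperfinite Fourier transform `F_k(f)`. -/
noncomputable def FTnet {n : ℕ} (f : Idx → En n → ℂ) (k : Idx → ℝ) : Idx → En n → ℂ :=
  fun e w => ∫ x in box n (k e), f e x * Complex.exp (-(Complex.I * (dotP x w : ℂ)))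

/- One-dimensional versions. -/

def SharpClosure1 (S : Set (Idx → ℝ)) : Set (Idx → ℝ) :=
  {x | ModerateR g x ∧ ∀ r, PosInvR g r → ∃ y ∈ S, ltR g (fun e => |y e - x e|) r}

def supp1 (ψ : Idx → ℝ → ℂ) : Set (Idx → ℝ) :=
  SharpClosure1 g {x | ModerateR g x ∧ PosInvR g fun e => ‖ψ e (x e)‖}

def IsGSF1 (X : Set (Idx → ℝ)) (ψ : Idx → ℝ → ℂ) : Prop :=
  (∀ e, ContDiff ℝ (⊤ : ℕ∞) (ψ e)) ∧
  ∀ x ∈ X, ∀ j : ℕ,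
    ModerateC g (fun e => iteratedDeriv j (ψ e) (x e)) ∧
    ∀ x' ∈ X, EquivR g x x' →
      EquivC g (fun e => iteratedDeriv j (ψ e) (x e))
        (fun e => iteratedDeriv j (ψ e) (x' e))

/-- One-dimensional hyperfinite Fourier transform over `[−k,k]`. -/
noncomputable def FT1 (ψ : Idx → ℝ → ℂ) (k : Idx → ℝ) : Idx → ℝ → ℂ :=
  fun e w => ∫ x in Set.Icc (-(k e)) (k e), ψ e x * Complex.exp (-(Complex.I * ((x * w : ℝ) : ℂ)))

/-! ### Auxiliary lemmas for the subpoint theorem -/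

def idxOne : Idx := ⟨1, one_pos, le_refl 1⟩

def idxMin (a b : Idx) : Idx :=
  ⟨min a.1 b.1, lt_min a.2.1 b.2.1, (min_le_left _ _).trans a.2.2⟩

def idxHalf (a : Idx) : Idx :=
  ⟨a.1 / 2, by constructor <;> [linarith [a.2.1]; linarith [a.2.2]]⟩

lemma evOn_of_ev {L : Set Idx} {P : Idx → Prop} (h : Ev P) : EvOn L P := by
  obtain ⟨e0, h⟩ := h
  exact ⟨e0, fun e _ he => h e he⟩

lemma evOn_and {L : Set Idx} {P Q : Idx → Prop} (hP : EvOn L P) (hQ : EvOn L Q) :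
    EvOn L fun e => P e ∧ Q e := by
  obtain ⟨a, ha⟩ := hP
  obtain ⟨b, hb⟩ := hQ
  refine ⟨idxMin a b, fun e he hle => ?_⟩
  exact ⟨ha e he (hle.trans (min_le_left _ _)), hb e he (hle.trans (min_le_right _ _))⟩

lemma ev_and {P Q : Idx → Prop} (hP : Ev P) (hQ : Ev Q) :
    Ev fun e => P e ∧ Q e := by
  obtain ⟨a, ha⟩ := hP
  obtain ⟨b, hb⟩ := hQ
  refine ⟨idxMin a b, fun e hle => ?_⟩
  exact ⟨ha e (hle.trans (min_le_left _ _)), hb e (hle.trans (min_le_right _ _))⟩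

lemma leR_pow {x y : Idx → ℝ} (h : leR g x y) (m : ℕ) :
    Ev fun e => x e ≤ y e + g.ρ e ^ m := by
  obtain ⟨z, hz, hxy⟩ := h
  obtain ⟨a, ha⟩ := ev_and (hz m) hxy
  refine ⟨a, fun e hle => ?_⟩
  obtain ⟨h1, h2⟩ := ha e hle
  rw [sub_zero] at h1
  have := abs_le.1 h1
  linarith [this.2]

lemma leROn_pow {L : Set Idx} {x y : Idx → ℝ} (h : leROn g L x y) (m : ℕ) :
    EvOn L fun e => x e ≤ y e + g.ρ e ^ m := by
  obtain ⟨z, hz, hxy⟩ := h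
  obtain ⟨a, ha⟩ := evOn_and (hz m) hxy
  refine ⟨a, fun e he hle => ?_⟩
  obtain ⟨h1, h2⟩ := ha e he hle
  rw [sub_zero] at h1
  have := abs_le.1 h1
  linarith [this.2]

lemma leR_of_pow {x y : Idx → ℝ} (h : ∀ m, Ev fun e => x e ≤ y e + g.ρ e ^ m) :
    leR g x y := by
  refine ⟨fun e => max (x e - y e) 0, fun m => ?_, ⟨idxOne, fun e _ => ?_⟩⟩
  · obtain ⟨a, ha⟩ := h m
    refine ⟨a, fun e hle => ?_⟩
    have h1 := ha e hle
    have hpos : (0:ℝ) < g.ρ e ^ m := pow_pos (g.pos e) m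
    beta_reduce
    rw [sub_zero, abs_of_nonneg (le_max_right _ _)]
    exact max_le (by linarith) hpos.le
  · beta_reduce
    have := le_max_left (x e - y e) 0
    linarith

lemma invR_of_pow {w : Idx → ℝ} (h : ∃ m, Ev fun e => g.ρ e ^ m ≤ |w e|) :
    InvR g w := by
  obtain ⟨m, a, ha⟩ := h
  refine ⟨fun e => (w e)⁻¹, ⟨m, a, fun e hle => ?_⟩, fun k => ⟨a, fun e hle => ?_⟩⟩
  · have h1 := ha e hle
    have hpos : (0:ℝ) < g.ρ e ^ m := pow_pos (g.pos e) m
    beta_reduce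
    rw [abs_inv, inv_pow]
    exact inv_anti₀ hpos h1
  · have h1 := ha e hle
    simp only at h1
    have hpos : (0:ℝ) < g.ρ e ^ m := pow_pos (g.pos e) m
    have hw : w e ≠ 0 := by
      intro h0; rw [h0, abs_zero] at h1; linarith
    beta_reduce
    rw [mul_inv_cancel₀ hw, sub_self, abs_zero]
    exact (pow_pos (g.pos e) k).le

lemma invROn_of_invR {L : Set Idx} {w : Idx → ℝ} (h : InvR g w) : InvROn g L w := by
  obtain ⟨u, ⟨N, hN⟩, heq⟩ := h
  exact ⟨u, ⟨N, evOn_of_ev hN⟩, fun m => evOn_of_ev (heq m)⟩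

lemma ltROn_of {L : Set Idx} {x y : Idx → ℝ} (m : ℕ)
    (h : ∀ e ∈ L, g.ρ e ^ m ≤ y e - x e) : ltROn g L x y := by
  constructor
  · refine ⟨fun _ => 0, fun k => ⟨idxOne, fun e _ _ => ?_⟩, ⟨idxOne, fun e he _ => ?_⟩⟩
    · beta_reduce
      rw [sub_zero, abs_zero]; exact (pow_pos (g.pos e) k).le
    · have h1 := h e he
      have hpos : (0:ℝ) < g.ρ e ^ m := pow_pos (g.pos e) m
      beta_reduce
      linarith
  · refine ⟨fun e => (y e - x e)⁻¹, ⟨m, idxOne, fun e he _ => ?_⟩,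
      fun k => ⟨idxOne, fun e he _ => ?_⟩⟩
    · have h1 := h e he
      have hpos : (0:ℝ) < g.ρ e ^ m := pow_pos (g.pos e) m
      beta_reduce
      rw [abs_inv, inv_pow, abs_of_pos (by linarith : (0:ℝ) < y e - x e)]
      exact inv_anti₀ hpos h1
    · have h1 := h e he
      have hpos : (0:ℝ) < g.ρ e ^ m := pow_pos (g.pos e) m
      beta_reduce
      rw [mul_inv_cancel₀ (show y e - x e ≠ 0 from (by linarith : (0:ℝ) < y e - x e).ne'),
        sub_self, abs_zero]
      exact (pow_pos (g.pos e) k).le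

lemma core_contra {L : Set Idx} {w : Idx → ℝ} (hL : CoFinal L)
    (hsmall : ∀ m, EvOn L fun e => |w e| ≤ g.ρ e ^ m)
    (hinv : InvROn g L w) : False := by
  obtain ⟨u, ⟨N, hN⟩, hequiv⟩ := hinv
  have h3 : EvOn L fun e => g.ρ e < 1/2 := evOn_of_ev (g.to_zero (1/2) (by norm_num))
  obtain ⟨a, ha⟩ := evOn_and (evOn_and (hsmall (N + 2)) hN) (evOn_and (hequiv 1) h3)
  obtain ⟨e, heL, helt⟩ := hL a.1 a.2.1
  obtain ⟨⟨hw, hu⟩, hwu, hρ⟩ := ha e heL helt.le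
  have hrpos : 0 < g.ρ e := g.pos e
  have hprod : |w e * u e| ≤ g.ρ e ^ 2 := by
    rw [abs_mul]
    calc |w e| * |u e| ≤ g.ρ e ^ (N+2) * (g.ρ e)⁻¹ ^ N :=
          mul_le_mul hw hu (abs_nonneg _) (pow_nonneg hrpos.le _)
      _ = g.ρ e ^ 2 := by
          rw [inv_pow]
          field_simp
          ring
  simp only at hwu
  have hlow : 1 - g.ρ e ≤ w e * u e := by
    have := (abs_le.1 hwu).1
    rw [pow_one] at this
    linarith
  have := le_abs_self (w e * u e)
  nlinarith [sq_nonneg (g.ρ e)]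

noncomputable def chain (f : ℕ → Idx → Idx) : ℕ → Idx
  | 0 => f 0 idxOne
  | k+1 => f (k+1) (chain f k)

lemma seq_construct {u : Idx → ℝ}
    (h : ∀ (m : ℕ) (e0 : Idx), ∃ e : Idx, e.1 ≤ e0.1 / 2 ∧ |u e| < g.ρ e ^ m) :
    ∃ L : Set Idx, CoFinal L ∧ (∀ m, EvOn L fun e => |u e| ≤ g.ρ e ^ m) := by
  classical
  set f : ℕ → Idx → Idx := fun m e0 => Classical.choose (h m e0) with hfdef
  have hf : ∀ m e0, (f m e0).1 ≤ e0.1 / 2 ∧ |u (f m e0)| < g.ρ (f m e0) ^ m :=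
    fun m e0 => Classical.choose_spec (h m e0)
  set s := chain f with hsdef
  have hhalf0 : (s 0).1 ≤ (idxOne).1 / 2 := (hf 0 idxOne).1
  have hhalf : ∀ k, (s (k+1)).1 ≤ (s k).1 / 2 := fun k => (hf (k+1) (s k)).1
  have hlt : ∀ k, (s (k+1)).1 < (s k).1 := fun k =>
    lt_of_le_of_lt (hhalf k) (by linarith [(s k).2.1])
  have hanti : StrictAnti fun k => (s k).1 := strictAnti_nat_of_succ_lt hlt
  have hbound : ∀ k, (s k).1 ≤ (1/2 : ℝ) ^ k := by
    intro k
    induction k with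
    | zero => simpa using (s 0).2.2
    | succ k ih =>
      calc (s (k+1)).1 ≤ (s k).1 / 2 := hhalf k
        _ ≤ (1/2:ℝ)^k / 2 := by linarith
        _ = (1/2:ℝ)^(k+1) := by ring
  have hspec : ∀ k, |u (s k)| < g.ρ (s k) ^ k := by
    intro k
    cases k with
    | zero => exact (hf 0 idxOne).2
    | succ k => exact (hf (k+1) (s k)).2
  refine ⟨Set.range s, ?_, ?_⟩
  · intro δ hδ
    obtain ⟨k, hk⟩ := exists_pow_lt_of_lt_one hδ (by norm_num : (1/2:ℝ) < 1)
    exact ⟨s k, Set.mem_range_self k, lt_of_le_of_lt (hbound k) hk⟩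
  · intro m
    refine ⟨s m, ?_⟩
    rintro e ⟨k, rfl⟩ hle
    have hkm : m ≤ k := by
      by_contra hc
      push_neg at hc
      exact absurd hle (not_le.2 (hanti hc))
    calc |u (s k)| ≤ g.ρ (s k) ^ k := (hspec k).le
      _ ≤ g.ρ (s k) ^ m := pow_le_pow_of_le_one (g.pos _).le (g.le_one _) hkm

lemma part1 {x y : Idx → ℝ} :
    ¬ leR g x y ↔ ∃ L : Set Idx, CoFinal L ∧ ltROn g L y x := by
  constructor
  · intro h
    have hm : ∃ m : ℕ, ∀ e0 : Idx, ∃ e : Idx, e.1 ≤ e0.1 ∧ ¬(x e ≤ y e + g.ρ e ^ m) := by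
      by_contra hc
      push_neg at hc
      exact h (leR_of_pow g hc)
    obtain ⟨m, hm⟩ := hm
    refine ⟨{e | g.ρ e ^ m ≤ x e - y e}, ?_, ?_⟩
    · intro δ hδ
      have ht : 0 < min δ 1 := lt_min hδ one_pos
      obtain ⟨e, hle, hne⟩ := hm ⟨min δ 1 / 2, by positivity, by
        have := min_le_right δ 1; linarith⟩
      push_neg at hne
      refine ⟨e, by simp only [Set.mem_setOf_eq]; linarith, ?_⟩
      have := min_le_left δ 1
      simp only at hle
      linarith
    · exact ltROn_of g m fun e he => he
  · rintro ⟨L, hL, hlt⟩ hle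
    have hsmall : ∀ m, EvOn L fun e => |x e - y e| ≤ g.ρ e ^ m := by
      intro m
      obtain ⟨a, ha⟩ := evOn_and (evOn_of_ev (L := L) (leR_pow g hle m)) (leROn_pow g hlt.1 m)
      refine ⟨a, fun e he hle' => ?_⟩
      obtain ⟨h1, h2⟩ := ha e he hle'
      rw [abs_le]
      constructor <;> linarith
    exact core_contra g hL hsmall hlt.2

lemma part2 {x y : Idx → ℝ} :
    ¬ ltR g x y ↔ ∃ L : Set Idx, CoFinal L ∧ leROn g L y x := by
  constructor
  · intro h
    by_cases hle : leR g x y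
    · have hni : ¬ InvR g fun e => y e - x e := fun hi => h ⟨hle, hi⟩
      have hm : ∀ (m : ℕ) (e0 : Idx), ∃ e : Idx, e.1 ≤ e0.1 / 2 ∧ |y e - x e| < g.ρ e ^ m := by
        intro m e0
        by_contra hc
        push_neg at hc
        exact hni (invR_of_pow g ⟨m, idxHalf e0, fun e hle' => hc e hle'⟩)
      obtain ⟨L, hL, hsmall⟩ := seq_construct g hm
      refine ⟨L, hL, ⟨fun e => |y e - x e|, fun m => ?_, ⟨idxOne, fun e _ _ => ?_⟩⟩⟩
      · obtain ⟨a, ha⟩ := hsmall m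
        exact ⟨a, fun e he hle' => by beta_reduce; rw [sub_zero, abs_abs]; exact ha e he hle'⟩
      · linarith [le_abs_self (y e - x e)]
    · obtain ⟨L, hL, hlt⟩ := (part1 g).1 hle
      exact ⟨L, hL, hlt.1⟩
  · rintro ⟨L, hL, hle⟩ ⟨hxy, hinv⟩
    have hsmall : ∀ m, EvOn L fun e => |y e - x e| ≤ g.ρ e ^ m := by
      intro m
      obtain ⟨a, ha⟩ := evOn_and (evOn_of_ev (L := L) (leR_pow g hxy m)) (leROn_pow g hle m)
      refine ⟨a, fun e he hle' => ?_⟩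
      obtain ⟨h1, h2⟩ := ha e he hle'
      rw [abs_le]
      constructor <;> linarith
    exact core_contra g hL hsmall (invROn_of_invR g hinv)

lemma part3 {x y : Idx → ℝ} :
    ¬ EquivR g x y ↔ ∃ L : Set Idx, CoFinal L ∧ (ltROn g L y x ∨ ltROn g L x y) := by
  constructor
  · intro h
    have hdisj : ¬ leR g x y ∨ ¬ leR g y x := by
      by_contra hc
      push_neg at hc
      refine h fun m => ?_
      obtain ⟨a, ha⟩ := ev_and (leR_pow g hc.1 m) (leR_pow g hc.2 m)
      refine ⟨a, fun e hle => ?_⟩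
      obtain ⟨h1, h2⟩ := ha e hle
      rw [abs_le]
      constructor <;> linarith
    rcases hdisj with h1 | h1
    · obtain ⟨L, hL, hlt⟩ := (part1 g).1 h1
      exact ⟨L, hL, Or.inl hlt⟩
    · obtain ⟨L, hL, hlt⟩ := (part1 g).1 h1
      exact ⟨L, hL, Or.inr hlt⟩
  · rintro ⟨L, hL, h | h⟩ heq
    · exact core_contra g hL (fun m => evOn_of_ev (heq m)) h.2
    · refine core_contra g hL (fun m => ?_) h.2
      obtain ⟨a, ha⟩ := heq m
      exact ⟨a, fun e _ hle => by beta_reduce; rw [abs_sub_comm]; exact ha e hle⟩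


/-- negations of inequalities via subpoints. -/
theorem negations_via_subpoints (g : Gauge) (x y : Idx → ℝ)
    (hx : ModerateR g x) (hy : ModerateR g y) :
    (¬ leR g x y ↔ ∃ L : Set Idx, CoFinal L ∧ ltROn g L y x) ∧
    (¬ ltR g x y ↔ ∃ L : Set Idx, CoFinal L ∧ leROn g L y x) ∧
    (¬ EquivR g x y ↔ ∃ L : Set Idx, CoFinal L ∧ (ltROn g L y x ∨ ltROn g L x y)) := by
  exact ⟨part1 g, part2 g, part3 g⟩

end

end HFT
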